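/- Let A ⊆ Ag and let L1, L2 be logics such that L1(α) = L2(α) + 4 for α ∈ A and L1(α) = L2(α) otherwise, where each L2(α) includes at most the frame conditions D, T, B. Let t^4_A be the translation defined by t^4_A([α]ψ) = Inv^α([α]t^4_A(ψ)) and t^4_A(⟨α⟩ψ) = Eve^α(⟨α⟩t^4_A(ψ)) for α ∈ A, and commuting with all other formula constructors. Then a closed formula φ is L1-satisfiable if and only if t^4_A(φ) is L2-satisfiable. -/

import Mathlib

/-- Formulas of the multi-agent modal μ-calculus. -/
inductive Formula (Ag PVar LVar : Type) : Type
  | prop  : PVar → Formula Ag PVar LVar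
  | nprop : PVar → Formula Ag PVar LVar
  | tt    : Formula Ag PVar LVar
  | ff    : Formula Ag PVar LVar
  | var   : LVar → Formula Ag PVar LVar
  | and   : Formula Ag PVar LVar → Formula Ag PVar LVar → Formula Ag PVar LVar
  | or    : Formula Ag PVar LVar → Formula Ag PVar LVar → Formula Ag PVar LVar
  | dia   : Ag → Formula Ag PVar LVar → Formula Ag PVar LVar
  | box   : Ag → Formula Ag PVar LVar → Formula Ag PVar LVar
  | mu    : LVar → Formula Ag PVar LVar → Formula Ag PVar LVar
  | nu    : LVar → Formula Ag PVar LVar → Formula Ag PVar LVar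
  deriving DecidableEq

/-- A Kripke model: a nonempty set of states, an accessibility relation per agent,
and a propositional valuation. -/
structure KModel (Ag PVar : Type) where
  W : Type
  h_ne : Nonempty W
  R : Ag → W → W → Prop
  V : W → Set PVar

variable {Ag PVar LVar : Type}

/-- The μ-calculus semantics of a formula relative to an environment. -/
def Formula.sem [DecidableEq LVar] (M : KModel Ag PVar) :
    Formula Ag PVar LVar → (LVar → Set M.W) → Set M.W
  | .prop p, _ => {s | p ∈ M.V s}
  | .nprop p, _ => {s | p ∉ M.V s}
  | .tt, _ => Set.univ
  | .ff, _ => ∅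
  | .var X, ρ => ρ X
  | .and φ ψ, ρ => Formula.sem M φ ρ ∩ Formula.sem M ψ ρ
  | .or φ ψ, ρ => Formula.sem M φ ρ ∪ Formula.sem M ψ ρ
  | .box a φ, ρ => {s | ∀ t, M.R a s t → t ∈ Formula.sem M φ ρ}
  | .dia a φ, ρ => {s | ∃ t, M.R a s t ∧ t ∈ Formula.sem M φ ρ}
  | .mu X φ, ρ => ⋂₀ {S | Formula.sem M φ (Function.update ρ X S) ⊆ S}
  | .nu X φ, ρ => ⋃₀ {S | S ⊆ Formula.sem M φ (Function.update ρ X S)}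

/-- Free recursion variables of a formula. -/
def Formula.freeVars : Formula Ag PVar LVar → Set LVar
  | .var X => {X}
  | .and φ ψ => Formula.freeVars φ ∪ Formula.freeVars ψ
  | .or φ ψ => Formula.freeVars φ ∪ Formula.freeVars ψ
  | .dia _ φ => Formula.freeVars φ
  | .box _ φ => Formula.freeVars φ
  | .mu X φ => Formula.freeVars φ \ {X}
  | .nu X φ => Formula.freeVars φ \ {X}
  | _ => ∅

/-- A formula is closed when it has no free recursion variables. -/
def Formula.Closed (φ : Formula Ag PVar LVar) : Prop := φ.freeVars = ∅

/-- Frame conditions D (serial), T (reflexive), B (symmetric), 4 (transitive), 5 (euclidean). -/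
inductive FrameCond : Type
  | D | T | B | four | five
  deriving DecidableEq

/-- A binary relation `R` satisfies a frame condition. -/
def SatisfiesCond {W : Type} (R : W → W → Prop) : FrameCond → Prop
  | .D => ∀ s, ∃ t, R s t
  | .T => ∀ s, R s s
  | .B => ∀ s t, R s t → R t s
  | .four => ∀ s t u, R s t → R t u → R s u
  | .five => ∀ s t u, R s t → R s u → R t u

/-- A logic assigns a set of frame conditions to each agent;
a model is an L-model when each agent's relation satisfies the agent's conditions. -/
def IsLModel (L : Ag → Set FrameCond) (M : KModel Ag PVar) : Prop :=
  ∀ a : Ag, ∀ c ∈ L a, SatisfiesCond (M.R a) c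

/-- A formula is L-satisfiable when it holds at some state of some L-model. -/
def LSatisfiable [DecidableEq LVar] (L : Ag → Set FrameCond)
    (φ : Formula Ag PVar LVar) : Prop :=
  ∃ (M : KModel Ag PVar), IsLModel L M ∧
    ∃ (w : M.W) (ρ : LVar → Set M.W), w ∈ Formula.sem M φ ρ

/-- Finite conjunction of a list of formulas (empty conjunction is tt). -/
def bigAnd : List (Formula Ag PVar LVar) → Formula Ag PVar LVar
  | [] => .tt
  | φ :: l => .and φ (bigAnd l)

/-- Syntactic negation, defined by the usual dualities. -/
def Formula.neg : Formula Ag PVar LVar → Formula Ag PVar LVar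
  | .prop p => .nprop p
  | .nprop p => .prop p
  | .tt => .ff
  | .ff => .tt
  | .var X => .var X
  | .and φ ψ => .or (Formula.neg φ) (Formula.neg ψ)
  | .or φ ψ => .and (Formula.neg φ) (Formula.neg ψ)
  | .dia a φ => .box a (Formula.neg φ)
  | .box a φ => .dia a (Formula.neg φ)
  | .mu X φ => .nu X (Formula.neg φ)
  | .nu X φ => .mu X (Formula.neg φ)

/-- Implication φ → ψ, encoded as ¬φ ∨ ψ. -/
def Formula.impl (φ ψ : Formula Ag PVar LVar) : Formula Ag PVar LVar := .or φ.neg ψ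

/-- The list of all variables (free or bound) occurring in a formula. -/
def Formula.varsList : Formula Ag PVar LVar → List LVar
  | .var X => [X]
  | .and φ ψ => Formula.varsList φ ++ Formula.varsList ψ
  | .or φ ψ => Formula.varsList φ ++ Formula.varsList ψ
  | .dia _ φ => Formula.varsList φ
  | .box _ φ => Formula.varsList φ
  | .mu X φ => X :: Formula.varsList φ
  | .nu X φ => X :: Formula.varsList φ
  | _ => []

/-- A recursion variable not occurring in φ (taking LVar = ℕ). -/
def freshVar (φ : Formula Ag PVar ℕ) : ℕ := (φ.varsList.foldr max 0) + 1

/-- The transitivity translation t^4_A: t^4_A([α]ψ) = Inv^α([α]t^4_A(ψ)) and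
t^4_A(⟨α⟩ψ) = Eve^α(⟨α⟩t^4_A(ψ)) for α ∈ A (with Inv^α(χ) = νX.(χ ∧ [α]X) and
Eve^α(χ) = μX.(χ ∨ ⟨α⟩X) for a fresh X), commuting with all other constructors. -/
def t4 [DecidableEq Ag] (A : Finset Ag) : Formula Ag PVar ℕ → Formula Ag PVar ℕ
  | .box a φ =>
      if a ∈ A then
        let χ : Formula Ag PVar ℕ := .box a (t4 A φ)
        let X : ℕ := freshVar χ
        .nu X (.and χ (.box a (.var X)))
      else .box a (t4 A φ)
  | .dia a φ =>
      if a ∈ A then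
        let χ : Formula Ag PVar ℕ := .dia a (t4 A φ)
        let X : ℕ := freshVar χ
        .mu X (.or χ (.dia a (.var X)))
      else .dia a (t4 A φ)
  | .and φ ψ => .and (t4 A φ) (t4 A ψ)
  | .or φ ψ => .or (t4 A φ) (t4 A ψ)
  | .mu X φ => .mu X (t4 A φ)
  | .nu X φ => .nu X (t4 A φ)
  | φ => φ

/-!
Evaluating `t4 A φ` in a model `M` is the same as evaluating `φ` in the model `M⁺` in which
every `R_α` with `α ∈ A` is replaced by its transitive closure: `Inv^α([α]ψ)` says that `ψ` holds
at every `R_α^* ; R_α = R_α⁺`-successor, and dually for `Eve^α(⟨α⟩ψ)`. Transitive closure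
preserves seriality, reflexivity and symmetry and fixes transitive relations, so an `L1`-model of
`φ` is itself an `L2`-model of `t4 A φ`, and an `L2`-model `M` of `t4 A φ` yields the `L1`-model
`M⁺` of `φ`.
-/

open Relation

namespace Formula

variable {Ag PVar LVar : Type}

theorem sem_congr [DecidableEq LVar] (M : KModel Ag PVar) (φ : Formula Ag PVar LVar)
    {ρ ρ' : LVar → Set M.W} (h : ∀ X ∈ φ.freeVars, ρ X = ρ' X) :
    φ.sem M ρ = φ.sem M ρ' := by
  induction φ generalizing ρ ρ' with
  | var X => exact h X rfl
  | and φ ψ ihφ ihψ | or φ ψ ihφ ihψ =>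
    simp only [sem, ihφ fun X hX => h X (Or.inl hX), ihψ fun X hX => h X (Or.inr hX)]
  | dia _ _ ih | box _ _ ih => simp only [sem, ih h]
  | mu X ψ ih | nu X ψ ih =>
    have hupdate : ∀ S, ψ.sem M (Function.update ρ X S) = ψ.sem M (Function.update ρ' X S) :=
      fun S => ih fun Y hY => by
        by_cases hYX : Y = X
        · subst hYX
          simp
        · simp only [Function.update_of_ne hYX]
          exact h Y ⟨hY, hYX⟩
    simp only [sem, hupdate]
  | _ => rfl

theorem mem_varsList_of_mem_freeVars {φ : Formula Ag PVar LVar} {X : LVar}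
    (h : X ∈ φ.freeVars) : X ∈ φ.varsList := by
  induction φ with
  | var Y => simp_all [freeVars, varsList]
  | and _ _ ihφ ihψ | or _ _ ihφ ihψ => exact List.mem_append.2 (h.imp ihφ ihψ)
  | dia _ _ ih | box _ _ ih => exact ih h
  | mu Y _ ih | nu Y _ ih => exact List.mem_cons_of_mem Y (ih h.1)
  | _ => simp [freeVars] at h

theorem sem_update_of_not_mem_varsList [DecidableEq LVar] (M : KModel Ag PVar)
    {φ : Formula Ag PVar LVar} {X : LVar} (hX : X ∉ φ.varsList) (ρ : LVar → Set M.W)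
    (S : Set M.W) : φ.sem M (Function.update ρ X S) = φ.sem M ρ :=
  φ.sem_congr M fun _ hY =>
    Function.update_of_ne (by rintro rfl; exact hX (mem_varsList_of_mem_freeVars hY)) _ _

theorem freshVar_not_mem_varsList (φ : Formula Ag PVar ℕ) : freshVar φ ∉ φ.varsList :=
  fun h => by
    have := List.le_max_of_le' 0 h le_rfl
    unfold freshVar at this
    omega

theorem sem_nu_and_box_var [DecidableEq LVar] (M : KModel Ag PVar) {χ : Formula Ag PVar LVar}
    {a : Ag} {X : LVar} (hX : X ∉ χ.varsList) (ρ : LVar → Set M.W) :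
    (nu X (and χ (box a (var X)))).sem M ρ
      = {s | ∀ t, ReflTransGen (M.R a) s t → t ∈ χ.sem M ρ} := by
  ext s
  simp only [sem, sem_update_of_not_mem_varsList M hX, Function.update_self, Set.mem_sUnion,
    Set.mem_ofPred_eq]
  constructor
  · rintro ⟨S, hS, hs⟩ t hst
    have ht : t ∈ S := by
      induction hst with
      | refl => exact hs
      | tail _ hr ih => exact (hS ih).2 _ hr
    exact (hS ht).1
  · intro hs
    exact ⟨{x | ∀ t, ReflTransGen (M.R a) x t → t ∈ χ.sem M ρ},
      fun x hx => ⟨hx x .refl, fun u hu t hut => hx t (.head hu hut)⟩, hs⟩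

theorem sem_mu_or_dia_var [DecidableEq LVar] (M : KModel Ag PVar) {χ : Formula Ag PVar LVar}
    {a : Ag} {X : LVar} (hX : X ∉ χ.varsList) (ρ : LVar → Set M.W) :
    (mu X (or χ (dia a (var X)))).sem M ρ
      = {s | ∃ t, ReflTransGen (M.R a) s t ∧ t ∈ χ.sem M ρ} := by
  ext s
  simp only [sem, sem_update_of_not_mem_varsList M hX, Function.update_self, Set.mem_sInter,
    Set.mem_ofPred_eq]
  constructor
  · intro hs
    refine hs {x | ∃ t, ReflTransGen (M.R a) x t ∧ t ∈ χ.sem M ρ} ?_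
    rintro x (hx | ⟨u, hu, t, hut, ht⟩)
    · exact ⟨x, .refl, hx⟩
    · exact ⟨t, .head hu hut, ht⟩
  · rintro ⟨t, hst, ht⟩ S hS
    exact hst.head_induction_on (hS (Or.inl ht)) fun hr _ hc => hS (Or.inr ⟨_, hr, hc⟩)

end Formula

open Formula

variable {Ag PVar : Type}

def KModel.transGenOn [DecidableEq Ag] (A : Finset Ag) (M : KModel Ag PVar) : KModel Ag PVar where
  W := M.W
  h_ne := M.h_ne
  R a := if a ∈ A then TransGen (M.R a) else M.R a
  V := M.V

theorem KModel.transGenOn_R_of_mem [DecidableEq Ag] {A : Finset Ag} (M : KModel Ag PVar) {a : Ag}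
    (ha : a ∈ A) : (M.transGenOn A).R a = TransGen (M.R a) := if_pos ha

theorem KModel.transGenOn_R_of_not_mem [DecidableEq Ag] {A : Finset Ag} (M : KModel Ag PVar)
    {a : Ag} (ha : a ∉ A) : (M.transGenOn A).R a = M.R a := if_neg ha

theorem sem_t4 [DecidableEq Ag] (A : Finset Ag) (M : KModel Ag PVar) (φ : Formula Ag PVar ℕ)
    (ρ : ℕ → Set M.W) : (t4 A φ).sem M ρ = φ.sem (M.transGenOn A) ρ := by
  induction φ generalizing ρ with
  | and _ _ ihφ ihψ | or _ _ ihφ ihψ => simp only [t4, sem, ihφ, ihψ]; rfl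
  | mu _ _ ih | nu _ _ ih => simp only [t4, sem, ih]; rfl
  | box a ψ ih =>
    by_cases ha : a ∈ A
    · simp only [t4, if_pos ha]
      rw [sem_nu_and_box_var M (freshVar_not_mem_varsList _)]
      ext s
      simp only [sem, ih, Set.mem_ofPred_eq, M.transGenOn_R_of_mem ha]
      exact ⟨fun h u hsu => let ⟨t, hst, htu⟩ := TransGen.tail'_iff.1 hsu; h t hst u htu,
        fun h t hst u htu => h u (TransGen.tail'_iff.2 ⟨t, hst, htu⟩)⟩
    · simp only [t4, if_neg ha, sem, ih, M.transGenOn_R_of_not_mem ha]; rfl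
  | dia a ψ ih =>
    by_cases ha : a ∈ A
    · simp only [t4, if_pos ha]
      rw [sem_mu_or_dia_var M (freshVar_not_mem_varsList _)]
      ext s
      simp only [sem, ih, M.transGenOn_R_of_mem ha]
      exact ⟨fun ⟨t, hst, u, htu, hu⟩ => ⟨u, TransGen.tail'_iff.2 ⟨t, hst, htu⟩, hu⟩,
        fun ⟨u, hsu, hu⟩ => let ⟨t, hst, htu⟩ := TransGen.tail'_iff.1 hsu; ⟨t, hst, u, htu, hu⟩⟩
    · simp only [t4, if_neg ha, sem, ih, M.transGenOn_R_of_not_mem ha]; rfl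
  | _ => rfl

theorem SatisfiesCond.transGen {W : Type} {R : W → W → Prop} {c : FrameCond} (hc : c ≠ .five)
    (h : SatisfiesCond R c) : SatisfiesCond (TransGen R) c := by
  cases c with
  | D => exact fun s => (h s).imp fun _ => .single
  | T => exact fun s => .single (h s)
  | B => exact fun s t hst => transGen_swap.1 (TransGen.mono h s t hst)
  | four => exact fun _ _ _ => .trans
  | five => exact absurd rfl hc

theorem IsLModel.mono {L L' : Ag → Set FrameCond} {M : KModel Ag PVar} (hM : IsLModel L' M)
    (h : ∀ a, L a ⊆ L' a) : IsLModel L M :=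
  fun a c hc => hM a c (h a hc)

theorem IsLModel.transGenOn [DecidableEq Ag] {A : Finset Ag} {L L' : Ag → Set FrameCond}
    {M : KModel Ag PVar} (hM : IsLModel L' M) (hA : ∀ a ∈ A, L a ⊆ insert .four (L' a))
    (hA' : ∀ a ∉ A, L a ⊆ L' a) (hfive : ∀ a, .five ∉ L' a) : IsLModel L (M.transGenOn A) := by
  intro a c hc
  by_cases ha : a ∈ A
  · rw [M.transGenOn_R_of_mem ha]
    rcases hA a ha hc with rfl | hc'
    · exact fun _ _ _ => .trans
    · exact (hM a c hc').transGen (ne_of_mem_of_not_mem hc' (hfive a))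
  · rw [M.transGenOn_R_of_not_mem ha]
    exact hM a c (hA' a ha hc)

theorem sem_transGenOn_of_transitive {LVar : Type} [DecidableEq LVar] [DecidableEq Ag]
    {A : Finset Ag} (M : KModel Ag PVar) (htrans : ∀ a ∈ A, SatisfiesCond (M.R a) .four)
    (φ : Formula Ag PVar LVar) (ρ : LVar → Set M.W) : φ.sem (M.transGenOn A) ρ = φ.sem M ρ := by
  obtain ⟨W, h_ne, R, V⟩ := M
  have hR : (fun a => if a ∈ A then TransGen (R a) else R a) = R := by
    funext a
    split_ifs with ha
    · have : IsTrans W (R a) := ⟨htrans a ha⟩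
      exact transGen_eq_self
    · rfl
  simp only [KModel.transGenOn]
  rw [hR]

theorem transitivity_translation_correct_general [DecidableEq Ag]
    (A : Finset Ag) (L1 L2 : Ag → Set FrameCond)
    (hA : ∀ a ∈ A, L1 a = L2 a ∪ {FrameCond.four})
    (hA' : ∀ a ∉ A, L1 a = L2 a)
    (hL2 : ∀ a : Ag, L2 a ⊆ {FrameCond.D, FrameCond.T, FrameCond.B})
    (φ : Formula Ag PVar ℕ) :
    LSatisfiable L1 φ ↔ LSatisfiable L2 (t4 A φ) := by
  constructor
  · rintro ⟨M, hM, w, ρ, hw⟩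
    have hL2L1 : ∀ a, L2 a ⊆ L1 a := fun a => by
      by_cases ha : a ∈ A
      · simp [hA a ha]
      · simp [hA' a ha]
    have htrans : ∀ a ∈ A, SatisfiesCond (M.R a) .four := fun a ha => hM a _ (by simp [hA a ha])
    refine ⟨M, hM.mono hL2L1, w, ρ, ?_⟩
    rwa [sem_t4, sem_transGenOn_of_transitive M htrans]
  · rintro ⟨M, hM, w, ρ, hw⟩
    have hfive : ∀ a, FrameCond.five ∉ L2 a := fun a h => by simpa using hL2 a h
    refine ⟨M.transGenOn A, hM.transGenOn (fun a ha => ?_) (fun a ha => (hA' a ha).subset) hfive,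
      w, ρ, sem_t4 A M φ ρ ▸ hw⟩
    simp [hA a ha]

/-- correctness of the transitivity translation. -/
theorem transitivity_translation_correct [DecidableEq Ag]
    (A : Finset Ag) (L1 L2 : Ag → Set FrameCond)
    (hA : ∀ a ∈ A, L1 a = L2 a ∪ {FrameCond.four})
    (hA' : ∀ a ∉ A, L1 a = L2 a)
    (hL2 : ∀ a : Ag, L2 a ⊆ {FrameCond.D, FrameCond.T, FrameCond.B})
    (φ : Formula Ag PVar ℕ) (hc : φ.Closed) :
    LSatisfiable L1 φ ↔ LSatisfiable L2 (t4 A φ) :=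
  transitivity_translation_correct_general A L1 L2 hA hA' hL2 φ
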